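/- Let X̃_{(1)} ≥ … ≥ X̃_{(p)} be the order statistics of p i.i.d. χ²₁ random variables. Then the expected sum of the k largest, E(Σ_{i=1}^k X̃_{(i)}), can be written as σ̃_p·E(Ỹ_p) + μ̃_p, where μ̃_p = −p∫_{1/p}^{k/p} H̃(u)du − H̃(1/p), σ̃_p = √p·σ̃(1/p, k/p), and Ỹ_p = (Σ_{i=1}^k X̃_{(i)} − μ̃_p)/σ̃_p; moreover μ̃_p/(2p) = G(k/(2p)) + O(log(p)/p) as p→∞ with k = ⌊px⌋, x ∈ (0,1). -/

import Mathlib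

open Real MeasureTheory Filter Set Asymptotics ProbabilityTheory

noncomputable def stdPdf (v : ℝ) : ℝ := (Real.sqrt (2 * Real.pi))⁻¹ * Real.exp (-(v ^ 2) / 2)
noncomputable def stdCdf (v : ℝ) : ℝ := ∫ t in Set.Iic v, stdPdf t
noncomputable def stdQuantile : ℝ → ℝ := Function.invFun stdCdf
noncomputable def Htilde (s : ℝ) : ℝ := -(stdQuantile (s / 2)) ^ 2
noncomputable def Gfun (x : ℝ) : ℝ := x - stdQuantile x * stdPdf (stdQuantile x)

/-- Truncated variance `σ̃²(s,t)`. -/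
noncomputable def sigmaSq (s t : ℝ) : ℝ :=
  ∫ u in s..t, ∫ v in s..t, (min u v - u * v) * deriv Htilde u * deriv Htilde v

/-- `μ̃_p = -p ∫_{1/p}^{k/p} H̃(u) du - H̃(1/p)`. -/
noncomputable def muTilde (p k : ℕ) : ℝ :=
  (-(p : ℝ) * ∫ u in (1 / (p : ℝ))..((k : ℝ) / p), Htilde u) - Htilde (1 / (p : ℝ))

/-- `σ̃_p = √p · σ̃(1/p, k/p)`. -/
noncomputable def sigmaTilde (p k : ℕ) : ℝ :=
  Real.sqrt (p : ℝ) * Real.sqrt (sigmaSq (1 / (p : ℝ)) ((k : ℝ) / p))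

/-- The chi-squared distribution with one degree of freedom:
the law of `Z²` for `Z` standard normal. -/
noncomputable def chiSq1 : Measure ℝ := (gaussianReal 0 1).map fun z => z ^ 2

/-- The sum of the `k` largest among `X 0 ω, …, X (p-1) ω`, realized as the
supremum over all size-`k` subsets of the corresponding subset sums. -/
noncomputable def topKSum {p : ℕ} {Ω : Type} (k : ℕ) (X : Fin p → Ω → ℝ) (ω : Ω) : ℝ :=
  ⨆ T : {T : Finset (Fin p) // T.card = k}, ∑ i ∈ (T : Finset (Fin p)), X i ω

open Topology

/-!
The first claim is linearity of expectation. For the second, `G' = (Φ⁻¹)²` makes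
`u ↦ -2 G(u/2)` an antiderivative of `H̃`, so with `y = 1/(2p)`
`μ̃_p/(2p) - G(k/(2p)) = Φ⁻¹(y)² y - G(y)`. Writing `Φ⁻¹(y) = -t`, the Mills ratio bounds
`t φ(t)/(1+t²) ≤ Φ(-t) ≤ φ(t)/t` give `t² ≤ 2 log(1/y)` and `t φ(t) ≤ (1+t²) y`, so both terms
are `O(y log(1/y)) = O(log p / p)`.
-/

lemma stdPdf_eq_gaussianPDFReal : stdPdf = gaussianPDFReal 0 1 := by
  funext v
  simp [stdPdf, gaussianPDFReal]

lemma stdPdf_pos (v : ℝ) : 0 < stdPdf v := by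
  unfold stdPdf
  positivity

lemma stdPdf_neg (v : ℝ) : stdPdf (-v) = stdPdf v := by
  simp [stdPdf]

lemma continuous_stdPdf : Continuous stdPdf := by
  unfold stdPdf
  fun_prop

lemma integrable_stdPdf : Integrable stdPdf :=
  stdPdf_eq_gaussianPDFReal ▸ integrable_gaussianPDFReal 0 1

lemma stdPdf_le_exp (v : ℝ) : stdPdf v ≤ exp (-(v ^ 2) / 2) := by
  have h : (1 : ℝ) ≤ √(2 * π) := Real.one_le_sqrt.2 (by linarith [pi_gt_three])
  unfold stdPdf
  exact mul_le_of_le_one_left (exp_pos _).le (inv_le_one_of_one_le₀ h)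

lemma hasDerivAt_stdPdf (v : ℝ) : HasDerivAt stdPdf (-v * stdPdf v) v := by
  have h : HasDerivAt (fun w : ℝ => -(w ^ 2) / 2) (-v) v :=
    ((hasDerivAt_pow 2 v).neg.div_const 2).congr_deriv (by ring)
  exact (h.exp.const_mul _).congr_deriv (by simp only [stdPdf]; ring)

lemma tendsto_stdPdf_atTop : Tendsto stdPdf atTop (𝓝 0) := by
  have h : Tendsto (fun v : ℝ => -(v ^ 2) / 2) atTop atBot :=
    (tendsto_neg_atTop_atBot.comp (tendsto_pow_atTop two_ne_zero)).atBot_div_const two_pos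
  have := (tendsto_exp_atBot.comp h).const_mul (√(2 * π))⁻¹
  rwa [mul_zero] at this

lemma stdCdf_eq_cdf : stdCdf = cdf (gaussianReal 0 1) := by
  funext v
  rw [cdf_eq_real, measureReal_def, gaussianReal_apply_eq_integral 0 one_ne_zero,
    ENNReal.toReal_ofReal (setIntegral_nonneg measurableSet_Iic fun _ _ =>
      gaussianPDFReal_nonneg 0 1 _), stdCdf, stdPdf_eq_gaussianPDFReal]

lemma stdCdf_sub_stdCdf (a b : ℝ) : stdCdf b - stdCdf a = ∫ t in a..b, stdPdf t :=
  intervalIntegral.integral_Iic_sub_Iic integrable_stdPdf.integrableOn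
    integrable_stdPdf.integrableOn

lemma hasDerivAt_stdCdf (v : ℝ) : HasDerivAt stdCdf (stdPdf v) v := by
  have h := intervalIntegral.integral_hasDerivAt_right (a := 0) (b := v)
    integrable_stdPdf.intervalIntegrable (continuous_stdPdf.stronglyMeasurableAtFilter _ _)
    continuous_stdPdf.continuousAt
  have heq : stdCdf = fun u => stdCdf 0 + ∫ t in (0 : ℝ)..u, stdPdf t := by
    funext u
    rw [← stdCdf_sub_stdCdf]
    ring
  rw [heq]
  exact h.const_add _

lemma strictMono_stdCdf : StrictMono stdCdf := fun a b hab => by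
  have h : 0 < ∫ t in a..b, stdPdf t :=
    intervalIntegral.intervalIntegral_pos_of_pos_on integrable_stdPdf.intervalIntegrable
      (fun t _ => stdPdf_pos t) hab
  linarith [stdCdf_sub_stdCdf a b]

lemma continuous_stdCdf : Continuous stdCdf :=
  continuous_iff_continuousAt.2 fun v => (hasDerivAt_stdCdf v).continuousAt

lemma stdCdf_mem_Ioo (v : ℝ) : stdCdf v ∈ Ioo (0 : ℝ) 1 := by
  have hlt := strictMono_stdCdf (sub_one_lt v)
  have hgt := strictMono_stdCdf (lt_add_one v)
  rw [stdCdf_eq_cdf] at hlt hgt ⊢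
  exact ⟨(cdf_nonneg _ _).trans_lt hlt, hgt.trans_le (cdf_le_one _ _)⟩

lemma surjOn_stdCdf : SurjOn stdCdf univ (Ioo 0 1) := by
  intro y hy
  obtain ⟨a, ha⟩ : ∃ a, stdCdf a < y := by
    rw [stdCdf_eq_cdf]
    exact ((tendsto_cdf_atBot (μ := gaussianReal 0 1)).eventually (eventually_lt_nhds hy.1)).exists
  obtain ⟨b, hb⟩ : ∃ b, y < stdCdf b := by
    rw [stdCdf_eq_cdf]
    exact ((tendsto_cdf_atTop (μ := gaussianReal 0 1)).eventually (eventually_gt_nhds hy.2)).exists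
  have hab : a ≤ b := (strictMono_stdCdf.lt_iff_lt.1 (ha.trans hb)).le
  obtain ⟨v, -, hv⟩ := intermediate_value_Icc hab continuous_stdCdf.continuousOn
    ⟨ha.le, hb.le⟩
  exact ⟨v, mem_univ v, hv⟩

lemma stdQuantile_stdCdf (v : ℝ) : stdQuantile (stdCdf v) = v :=
  Function.leftInverse_invFun strictMono_stdCdf.injective v

lemma stdCdf_stdQuantile {y : ℝ} (hy : y ∈ Ioo (0 : ℝ) 1) : stdCdf (stdQuantile y) = y := by
  obtain ⟨v, -, rfl⟩ := surjOn_stdCdf hy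
  rw [stdQuantile_stdCdf]

lemma strictMonoOn_stdQuantile : StrictMonoOn stdQuantile (Ioo 0 1) := fun a ha b hb hab => by
  rwa [← strictMono_stdCdf.lt_iff_lt, stdCdf_stdQuantile ha, stdCdf_stdQuantile hb]

lemma continuousAt_stdQuantile {y : ℝ} (hy : y ∈ Ioo (0 : ℝ) 1) :
    ContinuousAt stdQuantile y :=
  strictMonoOn_stdQuantile.continuousAt_of_image_mem_nhds (isOpen_Ioo.mem_nhds hy)
    (Filter.mem_of_superset univ_mem fun v _ =>
      ⟨stdCdf v, stdCdf_mem_Ioo v, stdQuantile_stdCdf v⟩)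

lemma hasDerivAt_stdQuantile {y : ℝ} (hy : y ∈ Ioo (0 : ℝ) 1) :
    HasDerivAt stdQuantile (stdPdf (stdQuantile y))⁻¹ y :=
  (hasDerivAt_stdCdf _).of_local_left_inverse (continuousAt_stdQuantile hy)
    (stdPdf_pos _).ne' (eventually_of_mem (isOpen_Ioo.mem_nhds hy) fun _ hz =>
      stdCdf_stdQuantile hz)

lemma stdQuantile_le_neg_one {y : ℝ} (hy : y ∈ Ioo (0 : ℝ) 1) (hy1 : y ≤ stdCdf (-1)) :
    stdQuantile y ≤ -1 := by
  rwa [← strictMono_stdCdf.le_iff_le, stdCdf_stdQuantile hy]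

lemma hasDerivAt_Gfun {y : ℝ} (hy : y ∈ Ioo (0 : ℝ) 1) :
    HasDerivAt Gfun (stdQuantile y ^ 2) y := by
  have hQ := hasDerivAt_stdQuantile hy
  have hφ := (stdPdf_pos (stdQuantile y)).ne'
  refine ((hasDerivAt_id y).sub (hQ.mul ((hasDerivAt_stdPdf _).comp y hQ))).congr_deriv ?_
  simp only [Function.comp_apply]
  field_simp
  ring

lemma continuousOn_Htilde : ContinuousOn Htilde (Ioo 0 2) := fun u hu =>
  ((continuousAt_stdQuantile (y := u / 2) ⟨by linarith [hu.1], by linarith [hu.2]⟩).comp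
    (f := fun u : ℝ => u / 2) (continuousAt_id.div_const 2)).pow 2 |>.neg.continuousWithinAt

lemma integral_Htilde {a b : ℝ} (ha : a ∈ Ioo (0 : ℝ) 2) (hb : b ∈ Ioo (0 : ℝ) 2) :
    ∫ u in a..b, Htilde u = 2 * (Gfun (a / 2) - Gfun (b / 2)) := by
  have hsub : uIcc a b ⊆ Ioo 0 2 := ordConnected_Ioo.uIcc_subset ha hb
  rw [intervalIntegral.integral_eq_sub_of_hasDerivAt (f := fun u => -2 * Gfun (u / 2))
    (fun u hu => ?_) (continuousOn_Htilde.mono hsub).intervalIntegrable]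
  · ring
  have hu : u / 2 ∈ Ioo (0 : ℝ) 1 := ⟨by linarith [(hsub hu).1], by linarith [(hsub hu).2]⟩
  have hG := ((hasDerivAt_Gfun hu).comp u ((hasDerivAt_id u).div_const 2)).const_mul (-2)
  exact hG.congr_deriv (by simp only [Htilde]; ring)

lemma muTilde_eq {p k : ℕ} (hk : 0 < k) (hkp : k < 2 * p) :
    muTilde p k = 2 * p * (Gfun (k / (2 * p)) - Gfun (1 / (2 * p))) +
      stdQuantile (1 / (2 * p)) ^ 2 := by
  have hp : (1 : ℝ) ≤ p := by exact_mod_cast (show 1 ≤ p by omega)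
  have hk' : (0 : ℝ) < k := by exact_mod_cast hk
  have hkp' : (k : ℝ) < 2 * p := by exact_mod_cast hkp
  have h1 : 1 / (p : ℝ) ∈ Ioo (0 : ℝ) 2 :=
    ⟨by positivity, by rw [div_lt_iff₀ (by linarith)]; linarith⟩
  have hkp2 : (k : ℝ) / p ∈ Ioo (0 : ℝ) 2 :=
    ⟨by positivity, by rwa [div_lt_iff₀ (by linarith)]⟩
  rw [muTilde, integral_Htilde h1 hkp2, Htilde, div_div, div_div, mul_comm (p : ℝ) 2]
  ring

lemma le_of_tendsto_of_hasDerivAt_nonpos {f f' : ℝ → ℝ} {a L : ℝ}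
    (hf : ∀ s, a ≤ s → HasDerivAt f (f' s) s) (hf' : ∀ s, a ≤ s → f' s ≤ 0)
    (hlim : Tendsto f atTop (𝓝 L)) : L ≤ f a := by
  have hanti : AntitoneOn f (Ici a) :=
    antitoneOn_of_hasDerivWithinAt_nonpos (convex_Ici a)
      (fun s hs => (hf s hs).continuousAt.continuousWithinAt)
      (fun s hs => (hf s (interior_subset hs)).hasDerivWithinAt)
      (fun s hs => hf' s (interior_subset hs))
  exact le_of_tendsto hlim (eventually_atTop.2 ⟨a, fun s hs => hanti self_mem_Ici hs hs⟩)

lemma hasDerivAt_stdCdf_neg (t : ℝ) : HasDerivAt (fun s => stdCdf (-s)) (-stdPdf t) t :=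
  ((hasDerivAt_stdCdf (-t)).comp t (hasDerivAt_neg t)).congr_deriv (by rw [stdPdf_neg]; ring)

lemma tendsto_stdCdf_neg_atTop : Tendsto (fun t => stdCdf (-t)) atTop (𝓝 0) := by
  rw [stdCdf_eq_cdf]
  exact (tendsto_cdf_atBot (μ := gaussianReal 0 1)).comp tendsto_neg_atTop_atBot

lemma stdCdf_neg_le_stdPdf_div {t : ℝ} (ht : 0 < t) : stdCdf (-t) ≤ stdPdf t / t := by
  have key := le_of_tendsto_of_hasDerivAt_nonpos (a := t) (L := 0)
    (f := fun s => stdPdf s / s - stdCdf (-s)) (f' := fun s => -stdPdf s / s ^ 2)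
    (fun s hs => ?_) (fun s _ => ?_) ?_
  · linarith
  · have hs0 : s ≠ 0 := (ht.trans_le hs).ne'
    refine (((hasDerivAt_stdPdf s).div (hasDerivAt_id' s) hs0).sub
      (hasDerivAt_stdCdf_neg s)).congr_deriv ?_
    field_simp
    ring
  · exact div_nonpos_of_nonpos_of_nonneg (neg_nonpos.2 (stdPdf_pos s).le) (sq_nonneg s)
  · simpa [div_eq_mul_inv] using
      (tendsto_stdPdf_atTop.mul tendsto_inv_atTop_zero).sub tendsto_stdCdf_neg_atTop

lemma mul_stdPdf_le_stdCdf_neg (t : ℝ) : t * stdPdf t ≤ (1 + t ^ 2) * stdCdf (-t) := by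
  have key := le_of_tendsto_of_hasDerivAt_nonpos (a := t) (L := 0)
    (f := fun s => stdCdf (-s) - s * stdPdf s / (1 + s ^ 2))
    (f' := fun s => -2 * stdPdf s / (1 + s ^ 2) ^ 2) (fun s _ => ?_) (fun s _ => ?_) ?_
  · rw [sub_nonneg, div_le_iff₀ (by positivity)] at key
    linarith
  · refine ((hasDerivAt_stdCdf_neg s).sub (((hasDerivAt_id' s).mul (hasDerivAt_stdPdf s)).div
      ((hasDerivAt_pow 2 s).const_add 1) (by positivity))).congr_deriv ?_
    simp only [Pi.mul_apply]
    field_simp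
    ring
  · exact div_nonpos_of_nonpos_of_nonneg (by linarith [stdPdf_pos s]) (sq_nonneg _)
  · have h : Tendsto (fun s => s * stdPdf s / (1 + s ^ 2)) atTop (𝓝 0) := by
      refine squeeze_zero' ?_ ?_ tendsto_stdPdf_atTop
      · filter_upwards [eventually_ge_atTop 0] with s hs
        have := (stdPdf_pos s).le
        positivity
      · filter_upwards [eventually_ge_atTop 0] with s hs
        rw [div_le_iff₀ (by positivity)]
        nlinarith [stdPdf_pos s, sq_nonneg (s - 1)]
    simpa using tendsto_stdCdf_neg_atTop.sub h

lemma sq_le_neg_two_mul_log_stdCdf_neg {t : ℝ} (ht : 1 ≤ t) :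
    t ^ 2 ≤ -2 * log (stdCdf (-t)) := by
  have hΦ : stdCdf (-t) ≤ exp (-(t ^ 2) / 2) := calc
    stdCdf (-t) ≤ stdPdf t / t := stdCdf_neg_le_stdPdf_div (by linarith)
    _ ≤ stdPdf t := div_le_self (stdPdf_pos t).le ht
    _ ≤ _ := stdPdf_le_exp t
  have := log_le_log (stdCdf_mem_Ioo (-t)).1 hΦ
  rw [log_exp] at this
  linarith

lemma abs_stdQuantile_sq_mul_sub_Gfun_le {y : ℝ} (hy : 0 < y) (hy1 : y ≤ stdCdf (-1)) :
    |stdQuantile y ^ 2 * y - Gfun y| ≤ 2 * y * (1 - log y) := by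
  have hy' : y ∈ Ioo (0 : ℝ) 1 := ⟨hy, hy1.trans_lt (stdCdf_mem_Ioo (-1)).2⟩
  set t := -stdQuantile y with ht
  have hQ : stdQuantile y = -t := by rw [ht, neg_neg]
  have hyt : stdCdf (-t) = y := by rw [← hQ, stdCdf_stdQuantile hy']
  have ht1 : 1 ≤ t := by linarith [stdQuantile_le_neg_one hy' hy1]
  have hsq := sq_le_neg_two_mul_log_stdCdf_neg ht1
  have hmills := mul_stdPdf_le_stdCdf_neg t
  rw [hyt] at hsq hmills
  have hG : Gfun y = y + t * stdPdf t := by rw [Gfun, hQ, stdPdf_neg]; ring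
  have hlog : log y ≤ 0 := log_nonpos hy.le hy'.2.le
  have htφ : 0 ≤ t * stdPdf t := mul_nonneg (by linarith) (stdPdf_pos t).le
  rw [hG, hQ, neg_sq, abs_le]
  constructor <;>
    nlinarith [mul_le_mul_of_nonneg_left hsq hy.le, mul_nonpos_of_nonneg_of_nonpos hy.le hlog]

theorem isBigO_muTilde_div_sub_Gfun {x : ℝ} (hx₀ : 0 < x) (hx₂ : x < 2) :
    (fun p : ℕ =>
        muTilde p ⌊(p : ℝ) * x⌋₊ / (2 * p) - Gfun ((⌊(p : ℝ) * x⌋₊ : ℝ) / (2 * p)))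
      =O[atTop] fun p : ℕ => Real.log p / p := by
  have hy : Tendsto (fun p : ℕ => 1 / (2 * (p : ℝ))) atTop (𝓝 0) :=
    tendsto_const_nhds.div_atTop (tendsto_natCast_atTop_atTop.const_mul_atTop two_pos)
  have hk_pos : ∀ᶠ p : ℕ in atTop, 0 < ⌊(p : ℝ) * x⌋₊ := by
    filter_upwards [(tendsto_natCast_atTop_atTop.atTop_mul_const hx₀).eventually_ge_atTop 1]
      with p hp
    exact Nat.floor_pos.2 hp
  refine IsBigO.of_bound 3 ?_
  filter_upwards [eventually_ge_atTop 3, hk_pos,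
    hy.eventually (eventually_le_nhds (stdCdf_mem_Ioo (-1)).1)] with p hp3 hk hyΦ
  set k := ⌊(p : ℝ) * x⌋₊
  have hp : (3 : ℝ) ≤ p := by exact_mod_cast hp3
  have hkp : k < 2 * p := by
    have : (k : ℝ) < 2 * p := (Nat.floor_le (by positivity)).trans_lt (by nlinarith)
    exact_mod_cast this
  have hlogp : 1 ≤ log p := by
    rw [le_log_iff_exp_le (by positivity)]
    linarith [exp_one_lt_d9]
  have hlog2 : log 2 < 1 := by linarith [log_two_lt_d9]
  have hdiff : muTilde p k / (2 * p) - Gfun (k / (2 * p)) =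
      stdQuantile (1 / (2 * p)) ^ 2 * (1 / (2 * p)) - Gfun (1 / (2 * p)) := by
    rw [muTilde_eq hk hkp]
    field_simp
    ring
  have hlogp_div : 0 ≤ log p / p := div_nonneg (by linarith) (by positivity)
  rw [hdiff, Real.norm_eq_abs, Real.norm_eq_abs, abs_of_nonneg hlogp_div]
  calc _ ≤ 2 * (1 / (2 * p)) * (1 - log (1 / (2 * p))) :=
        abs_stdQuantile_sq_mul_sub_Gfun_le (by positivity) hyΦ
    _ = (1 + log 2 + log p) / p := by
        rw [one_div, log_inv, log_mul two_ne_zero (by positivity)]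
        field_simp
        ring
    _ ≤ 3 * (log p / p) := by
        rw [← mul_div_assoc]
        exact div_le_div_of_nonneg_right (by linarith) (by positivity)

lemma integral_eq_mul_integral_sub_div_add {Ω : Type*} [MeasurableSpace Ω] {P : Measure Ω}
    [IsProbabilityMeasure P] {f : Ω → ℝ} (hf : Integrable f P) (μ : ℝ) {σ : ℝ} (hσ : σ ≠ 0) :
    ∫ ω, f ω ∂P = σ * ∫ ω, (f ω - μ) / σ ∂P + μ := by
  rw [integral_div, integral_sub hf (integrable_const μ), integral_const, probReal_univ,
    one_smul, mul_div_cancel₀ _ hσ, sub_add_cancel]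

theorem orderstat_sum_decomposition (x : ℝ) (hx : x ∈ Set.Ioo (0 : ℝ) 1) :
    (∀ (Ω : Type) (_ : MeasurableSpace Ω) (P : Measure Ω), IsProbabilityMeasure P →
      ∀ (p k : ℕ), k ≤ p → ∀ X : Fin p → Ω → ℝ,
        (∀ i, Measurable (X i)) →
        (∀ i, P.map (X i) = chiSq1) →
        iIndepFun X P →
        Integrable (topKSum k X) P →
        sigmaTilde p k ≠ 0 →
        (∫ ω, topKSum k X ω ∂P) =
          sigmaTilde p k *
              (∫ ω, (topKSum k X ω - muTilde p k) / sigmaTilde p k ∂P) +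
            muTilde p k) ∧
    (fun p : ℕ =>
        muTilde p ⌊(p : ℝ) * x⌋₊ / (2 * p) - Gfun ((⌊(p : ℝ) * x⌋₊ : ℝ) / (2 * p)))
      =O[atTop] fun p : ℕ => Real.log p / p := by
  refine ⟨fun Ω _ P hP p k _ X _ _ _ hint hσ => ?_,
    isBigO_muTilde_div_sub_Gfun hx.1 (hx.2.trans one_lt_two)⟩
  have := hP
  exact integral_eq_mul_integral_sub_div_add hint _ hσ
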